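/- Every cluster Z ∈ 𝐙 admits an enumeration z_1, …, z_n of its elements such that every prefix {z_1, …, z_i} (1 ≤ i ≤ n) is itself a cluster; equivalently, C_{z_i} ∩ C^T({z_1, …, z_{i−1}}) ≠ ∅ for every 2 ≤ i ≤ n. -/

import Mathlib

/-!
Build the enumeration greedily: as long as the devices listed so far form a proper part `S` of
the cluster `Z`, the cluster property for `S ⊆ Z` yields a device of `Z \ S` whose zone meets
`C^T(S)`. Conversely, adding to a cluster a device whose zone meets its total coverage zone
gives again a cluster: a partition of the enlarged set either restricts to a partition of the
old cluster or splits off the new device alone, and in both cases the two coverage zones meet.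
Induction along the enumeration then shows that every prefix is a cluster.
-/

open Finset

variable {V : Type*} [Fintype V] [DecidableEq V]

/-- The total coverage zone `C^T(X) = ⋃_{x ∈ X} C_x`. -/
def totCov (C : V → Finset V) (X : Finset V) : Finset V := X.biUnion C

/-- `Z ∈ 𝐙`: a cluster is a non-empty set every non-empty proper subset of which
interferes with its complement in the cluster. -/
def IsCluster (C : V → Finset V) (Z : Finset V) : Prop :=
  Z.Nonempty ∧ ∀ z ⊆ Z, z.Nonempty → z ≠ Z →
    (totCov C z ∩ totCov C (Z \ z)).Nonempty

section

variable {α : Type*} [DecidableEq α] {C : α → Finset α}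

@[simp]
lemma totCov_singleton (a : α) : totCov C {a} = C a := singleton_biUnion

lemma totCov_mono {X Y : Finset α} (h : X ⊆ Y) : totCov C X ⊆ totCov C Y :=
  biUnion_subset_biUnion_of_subset_left C h

lemma subset_totCov {X : Finset α} {x : α} (hx : x ∈ X) : C x ⊆ totCov C X :=
  subset_biUnion_of_mem C hx

lemma isCluster_iff {Z : Finset α} :
    IsCluster C Z ↔ Z.Nonempty ∧ ∀ z w : Finset α, Disjoint z w → z ∪ w = Z →
      z.Nonempty → w.Nonempty → (totCov C z ∩ totCov C w).Nonempty := by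
  refine and_congr_right fun _ => ⟨fun h z w hzw hZ hz hw => ?_, fun h z hz hne hzZ => ?_⟩
  · have hzZ : z ≠ Z := by
      rintro rfl
      obtain ⟨x, hx⟩ := hw
      exact disjoint_left.1 hzw (hZ ▸ mem_union_right z hx) hx
    have hw : Z \ z = w := by rw [← hZ, union_sdiff_left, sdiff_eq_self_of_disjoint hzw.symm]
    exact hw ▸ h z (hZ ▸ subset_union_left) hz hzZ
  · exact h z (Z \ z) disjoint_sdiff (union_sdiff_of_subset hz) hne
      (sdiff_nonempty.2 fun hZz => hzZ (hz.antisymm hZz))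

lemma isCluster_singleton (a : α) : IsCluster C {a} :=
  ⟨singleton_nonempty a, fun _ hz hne hza =>
    ((subset_singleton_iff.1 hz).resolve_left hne.ne_empty |> hza).elim⟩

lemma IsCluster.insert {S : Finset α} {b : α} (hS : IsCluster C S)
    (hb : (C b ∩ totCov C S).Nonempty) : IsCluster C (insert b S) := by
  by_cases hbS : b ∈ S
  · rwa [insert_eq_of_mem hbS]
  rw [isCluster_iff] at hS ⊢
  refine ⟨insert_nonempty b S, fun z w hzw hZ hz hw => ?_⟩
  have hS' : z.erase b ∪ w.erase b = S := by rw [← erase_union_distrib, hZ, erase_insert hbS]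
  -- The part that loses all its elements when `b` is removed is `{b}`, and the other one is `S`.
  have split_off : ∀ z w : Finset α, Disjoint z w → z.erase b ∪ w.erase b = S → z.Nonempty →
      z.erase b = ∅ → (totCov C z ∩ totCov C w).Nonempty := by
    intro z w hzw hS' hz hz'
    obtain rfl : z = {b} := ((erase_eq_empty_iff z b).1 hz').resolve_left hz.ne_empty
    rw [hz', empty_union, erase_eq_of_notMem (disjoint_singleton_left.1 hzw)] at hS'
    subst hS'
    rwa [totCov_singleton]
  rcases (z.erase b).eq_empty_or_nonempty with hz' | hz'
  · exact split_off z w hzw hS' hz hz'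
  rcases (w.erase b).eq_empty_or_nonempty with hw' | hw'
  · rw [inter_comm]
    exact split_off w z hzw.symm (by rwa [union_comm]) hw hw'
  exact (hS.2 _ _ (disjoint_of_subset_left (erase_subset b z)
    (disjoint_of_subset_right (erase_subset b w) hzw)) hS' hz' hw').mono
    (inter_subset_inter (totCov_mono (erase_subset b z)) (totCov_mono (erase_subset b w)))

lemma IsCluster.exists_inter_totCov_nonempty {Z S : Finset α} (hZ : IsCluster C Z)
    (hSZ : S ⊆ Z) (hS : S.Nonempty) (hne : S ≠ Z) :
    ∃ b ∈ Z \ S, (C b ∩ totCov C S).Nonempty := by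
  obtain ⟨p, hp⟩ := hZ.2 S hSZ hS hne
  obtain ⟨hpS, hpZS⟩ := mem_inter.1 hp
  obtain ⟨b, hb, hpb⟩ := mem_biUnion.1 hpZS
  exact ⟨b, hb, p, mem_inter.2 ⟨hpb, hpS⟩⟩

def IsInterferenceOrder (C : α → Finset α) (l : List α) : Prop :=
  ∀ i (hi : i < l.length), 1 ≤ i → (C l[i] ∩ totCov C (l.take i).toFinset).Nonempty

lemma IsInterferenceOrder.concat {l : List α} {b : α} (hl : IsInterferenceOrder C l)
    (hb : (C b ∩ totCov C l.toFinset).Nonempty) : IsInterferenceOrder C (l ++ [b]) := by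
  intro i hi hi1
  rw [List.length_append, List.length_singleton] at hi
  rcases Nat.lt_or_ge i l.length with hil | hil
  · rw [List.getElem_append_left hil, List.take_append_of_le_length hil.le]
    exact hl i hil hi1
  · obtain rfl : i = l.length := by omega
    simpa using hb

lemma List.toFinset_take_add_one (l : List α) {i : ℕ} (hi : i < l.length) :
    (l.take (i + 1)).toFinset = insert l[i] (l.take i).toFinset := by
  rw [← List.take_concat_get' l i hi, List.toFinset_append, union_comm]
  rfl

lemma IsInterferenceOrder.isCluster_take {l : List α} (hl : IsInterferenceOrder C l) {i : ℕ}
    (hi1 : 1 ≤ i) (hil : i ≤ l.length) : IsCluster C (l.take i).toFinset := by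
  induction i, hi1 using Nat.le_induction with
  | base =>
    rw [List.take_one, List.head?_eq_getElem?, List.getElem?_eq_getElem hil]
    exact isCluster_singleton _
  | succ i hi1 ih =>
    rw [List.toFinset_take_add_one l hil]
    exact (ih (by omega)).insert (hl i hil hi1)

lemma IsCluster.exists_interferenceOrder_length {Z : Finset α} (hZ : IsCluster C Z) {k : ℕ}
    (hk1 : 1 ≤ k) (hkZ : k ≤ #Z) :
    ∃ l : List α, l.Nodup ∧ l.length = k ∧ l.toFinset ⊆ Z ∧ IsInterferenceOrder C l := by
  induction k, hk1 using Nat.le_induction with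
  | base =>
    obtain ⟨a, ha⟩ := hZ.1
    refine ⟨[a], List.nodup_singleton a, rfl, by simpa using ha, fun i hi hi1 => ?_⟩
    rw [List.length_singleton] at hi
    omega
  | succ k hk1 ih =>
    obtain ⟨l, hnd, hlen, hlZ, hl⟩ := ih (by omega)
    have hne : l.toFinset ≠ Z := fun h => by
      have hcard := List.toFinset_card_of_nodup hnd
      rw [h] at hcard
      omega
    have hl0 : l.toFinset.Nonempty := by
      rw [List.toFinset_nonempty_iff, ← List.length_pos_iff]
      omega
    obtain ⟨b, hb, hbl⟩ := hZ.exists_inter_totCov_nonempty hlZ hl0 hne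
    obtain ⟨hbZ, hbl'⟩ := mem_sdiff.1 hb
    refine ⟨l ++ [b], ?_, by simp [hlen], ?_, hl.concat hbl⟩
    · exact hnd.append (List.nodup_singleton b)
        (List.disjoint_singleton.2 fun h => hbl' (List.mem_toFinset.2 h))
    · simpa [List.toFinset_append] using insert_subset hbZ hlZ

lemma IsCluster.exists_interferenceOrder {Z : Finset α} (hZ : IsCluster C Z) :
    ∃ l : List α, l.Nodup ∧ l.toFinset = Z ∧ IsInterferenceOrder C l := by
  obtain ⟨l, hnd, hlen, hlZ, hl⟩ :=
    hZ.exists_interferenceOrder_length (card_pos.2 hZ.1) le_rfl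
  refine ⟨l, hnd, eq_of_subset_of_card_le hlZ ?_, hl⟩
  rw [List.toFinset_card_of_nodup hnd, hlen]

end

theorem stmt15_general (C : V → Finset V) (Z : Finset V)
    (hZ : IsCluster C Z) :
    ∃ l : List V, l.Nodup ∧ l.toFinset = Z ∧
      -- every prefix is itself a cluster ...
      (∀ i : ℕ, 1 ≤ i → i ≤ l.length → IsCluster C (l.take i).toFinset) ∧
      -- ... equivalently, each device interferes with the preceding prefix
      (∀ i : Fin l.length, 1 ≤ (i : ℕ) →
        (C (l.get i) ∩ totCov C (l.take (i : ℕ)).toFinset).Nonempty) := by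
  obtain ⟨l, hnd, rfl, hl⟩ := hZ.exists_interferenceOrder
  exact ⟨l, hnd, rfl, fun i hi1 hil => hl.isCluster_take hi1 hil,
    fun i hi1 => by simpa using hl i i.isLt hi1⟩

theorem stmt15 (C : V → Finset V) (hC : ∀ i, i ∈ C i) (Z : Finset V)
    (hZ : IsCluster C Z) :
    ∃ l : List V, l.Nodup ∧ l.toFinset = Z ∧
      -- every prefix is itself a cluster ...
      (∀ i : ℕ, 1 ≤ i → i ≤ l.length → IsCluster C (l.take i).toFinset) ∧
      -- ... equivalently, each device interferes with the preceding prefix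
      (∀ i : Fin l.length, 1 ≤ (i : ℕ) →
        (C (l.get i) ∩ totCov C (l.take (i : ℕ)).toFinset).Nonempty) :=
  stmt15_general C Z hZ
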